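/- arXiv:2003.09505 — 4 statements merged into one kernel-verified Lean document; each statement's English description precedes it below -/
import Mathlib

section
/- Let n ≥ 1, let p : {1,…,n} → [0,1] be a probability profile, let D > 0 be a target, and let σ be a sorting permutation for p. Let k be the smallest integer in {0,1,…,n} such that ∑_{i=1}^{k} p_{σ(i)} > D − 1/2, and set k = n if ∑_{i=1}^{n} p_{σ(i)} ≤ D − 1/2. Then the subset S = {σ(1),…,σ(k)} is optimal, i.e., f_{p,D}(S) ≤ f_{p,D}(T) for every subset T ⊆ {1,…,n}. -/
open Finset

/-- Expected loss `f_{p,D}(S) = (∑_{i∈S} p_i − D)² + ∑_{i∈S} p_i(1 − p_i)`. -/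
noncomputable def expLoss {n : ℕ} (p : Fin n → ℝ) (D : ℝ) (S : Finset (Fin n)) : ℝ :=
  (∑ i ∈ S, p i - D) ^ 2 + ∑ i ∈ S, p i * (1 - p i)

/-- The set `{σ(1),…,σ(k)}` (1-based), i.e. the image under `σ` of the first `k` indices. -/
def prefixSet {n : ℕ} (σ : Equiv.Perm (Fin n)) (k : ℕ) : Finset (Fin n) :=
  (Finset.univ.filter fun i : Fin n => (i : ℕ) < k).image σ

/-!
Writing `c = D - 1/2`, the expected loss is `(∑_S p - c)² - ∑_S p² + (D - 1/4)`, and adding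
an element `x` to a set of mass `t` changes the first two terms by `2 p_x (t - c)`. Hence every
set `T` other than the greedy prefix `P` can be moved strictly closer to `P` (in symmetric
difference) without increasing the loss: add a missing element of `P` while `t ≤ c`, and
otherwise drop an element outside `P`, replacing it by a (heavier) missing element of `P` when
dropping alone would take the mass below `c`.
-/

section Greedy

variable {ι : Type*} [DecidableEq ι] {p : ι → ℝ} {c : ℝ}

theorem symmDiff_insert_ssubset {T P : Finset ι} {y : ι} (hyP : y ∈ P) (hyT : y ∉ T) :
    symmDiff (insert y T) P ⊂ symmDiff T P := by
  rw [ssubset_iff_of_subset]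
  · exact ⟨y, by simp [mem_symmDiff, hyP, hyT], by simp [mem_symmDiff, hyP]⟩
  · intro i
    simp only [mem_symmDiff, mem_insert]
    grind

theorem symmDiff_erase_ssubset {T P : Finset ι} {x : ι} (hxT : x ∈ T) (hxP : x ∉ P) :
    symmDiff (T.erase x) P ⊂ symmDiff T P := by
  rw [ssubset_iff_of_subset]
  · exact ⟨x, by simp [mem_symmDiff, hxP, hxT], by simp [mem_symmDiff, hxP]⟩
  · intro i
    simp only [mem_symmDiff, mem_erase]
    grind

noncomputable def reducedLoss (p : ι → ℝ) (c : ℝ) (S : Finset ι) : ℝ :=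
  (∑ i ∈ S, p i - c) ^ 2 - ∑ i ∈ S, p i ^ 2

theorem reducedLoss_insert {S : Finset ι} {x : ι} (hx : x ∉ S) :
    reducedLoss p c (insert x S) = reducedLoss p c S + 2 * p x * (∑ i ∈ S, p i - c) := by
  unfold reducedLoss
  rw [sum_insert hx, sum_insert hx]
  ring

structure IsGreedy (p : ι → ℝ) (c : ℝ) (P : Finset ι) : Prop where
  le_of_mem_of_notMem : ∀ x ∈ P, ∀ y ∉ P, p y ≤ p x
  sum_erase_le : ∀ x ∈ P, ∑ i ∈ P.erase x, p i ≤ c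
  lt_sum : ∀ y ∉ P, c < ∑ i ∈ P, p i

namespace IsGreedy

variable {P : Finset ι}

theorem exists_reducedLoss_le (hP : IsGreedy p c P) (hp : ∀ i, 0 ≤ p i) {T : Finset ι}
    (hTP : T ≠ P) :
    ∃ T', reducedLoss p c T' ≤ reducedLoss p c T ∧ symmDiff T' P ⊂ symmDiff T P := by
  have sum_mono {A B : Finset ι} (h : A ⊆ B) : ∑ i ∈ A, p i ≤ ∑ i ∈ B, p i :=
    sum_le_sum_of_subset_of_nonneg h fun i _ _ => hp i
  by_cases htc : ∑ i ∈ T, p i ≤ c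
  · obtain ⟨y, hyP, hyT⟩ : ∃ y ∈ P, y ∉ T := by
      by_contra! hPT
      obtain ⟨x, -, hxP⟩ := not_subset.1 fun hTP' => hTP (Subset.antisymm hTP' hPT)
      linarith [hP.lt_sum x hxP, sum_mono hPT]
    refine ⟨insert y T, ?_, symmDiff_insert_ssubset hyP hyT⟩
    rw [reducedLoss_insert hyT]
    nlinarith [hp y]
  replace htc := not_le.1 htc
  obtain ⟨x, hxT, hxP⟩ : ∃ x ∈ T, x ∉ P := by
    by_contra! hTP'
    obtain ⟨y, hyP, hyT⟩ := not_subset.1 fun hPT => hTP (Subset.antisymm hTP' hPT)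
    have : T ⊆ P.erase y := fun i hi => mem_erase.2 ⟨fun h => hyT (h ▸ hi), hTP' i hi⟩
    linarith [hP.sum_erase_le y hyP, sum_mono this]
  have hxT' : x ∉ T.erase x := notMem_erase x T
  have hdrop : reducedLoss p c T
      = reducedLoss p c (T.erase x) + 2 * p x * (∑ i ∈ T.erase x, p i - c) := by
    rw [← reducedLoss_insert hxT', insert_erase hxT]
  by_cases hxc : c ≤ ∑ i ∈ T.erase x, p i
  · refine ⟨T.erase x, ?_, symmDiff_erase_ssubset hxT hxP⟩
    nlinarith [hp x]
  replace hxc := not_le.1 hxc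
  obtain ⟨y, hyP, hyT⟩ : ∃ y ∈ P, y ∉ T.erase x := by
    by_contra! hPT
    linarith [hP.lt_sum x hxP, sum_mono hPT]
  refine ⟨insert y (T.erase x), ?_, (symmDiff_insert_ssubset hyP hyT).trans
    (symmDiff_erase_ssubset hxT hxP)⟩
  rw [reducedLoss_insert hyT, hdrop]
  nlinarith [hP.le_of_mem_of_notMem y hyP x hxP]

theorem reducedLoss_le (hP : IsGreedy p c P) (hp : ∀ i, 0 ≤ p i) (T : Finset ι) :
    reducedLoss p c P ≤ reducedLoss p c T := by
  rcases eq_or_ne T P with rfl | hTP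
  · exact le_rfl
  obtain ⟨T', hle, hlt⟩ := hP.exists_reducedLoss_le hp hTP
  exact (hP.reducedLoss_le hp T').trans hle
termination_by #(symmDiff T P)
decreasing_by exact card_lt_card hlt

end IsGreedy

end Greedy

theorem expLoss_eq_reducedLoss {n : ℕ} (p : Fin n → ℝ) (D : ℝ) (S : Finset (Fin n)) :
    expLoss p D S = reducedLoss p (D - 1/2) S + (D - 1/4) := by
  unfold expLoss reducedLoss
  have h : ∑ i ∈ S, p i * (1 - p i) = ∑ i ∈ S, p i - ∑ i ∈ S, p i ^ 2 := by
    rw [← sum_sub_distrib]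
    exact sum_congr rfl fun i _ => by ring
  rw [h]
  ring

section Prefix

variable {n : ℕ} {σ : Equiv.Perm (Fin n)}

theorem mem_prefixSet {k : ℕ} {x : Fin n} : x ∈ prefixSet σ k ↔ (σ.symm x : ℕ) < k := by
  simp only [prefixSet, mem_image, mem_filter, mem_univ, true_and]
  exact ⟨by rintro ⟨i, hi, rfl⟩; simpa using hi, fun h => ⟨σ.symm x, h, σ.apply_symm_apply x⟩⟩

theorem prefixSet_self : prefixSet σ n = univ :=
  eq_univ_of_forall fun x => mem_prefixSet.2 (σ.symm x).isLt

theorem prefixSet_succ {k : ℕ} (hk : k < n) :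
    prefixSet σ (k + 1) = insert (σ ⟨k, hk⟩) (prefixSet σ k) := by
  ext x
  rw [mem_insert, mem_prefixSet, mem_prefixSet, ← Equiv.symm_apply_eq, Fin.ext_iff]
  dsimp only
  omega

theorem notMem_prefixSet_self {k : ℕ} (hk : k < n) : σ ⟨k, hk⟩ ∉ prefixSet σ k := by
  simp [mem_prefixSet]

variable {p : Fin n → ℝ}

theorem le_of_symm_le (hσ : ∀ i j : Fin n, i ≤ j → p (σ j) ≤ p (σ i)) {x y : Fin n}
    (h : (σ.symm x : ℕ) ≤ σ.symm y) : p y ≤ p x := by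
  simpa using hσ _ _ (Fin.le_def.2 h)

theorem isGreedy_prefixSet (hp : ∀ i, 0 ≤ p i) (hσ : ∀ i j : Fin n, i ≤ j → p (σ j) ≤ p (σ i))
    {c : ℝ} {k : ℕ} (hk : k ≤ n)
    (hkdef : (c < ∑ i ∈ prefixSet σ k, p i ∧ ∀ m < k, ∑ i ∈ prefixSet σ m, p i ≤ c) ∨
      (k = n ∧ ∑ i ∈ prefixSet σ n, p i ≤ c)) :
    IsGreedy p c (prefixSet σ k) where
  le_of_mem_of_notMem x hx y hy :=
    le_of_symm_le hσ (by rw [mem_prefixSet] at hx hy; omega)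
  sum_erase_le x hx := by
    rcases hkdef with ⟨-, hlow⟩ | ⟨rfl, htot⟩
    · obtain ⟨m, rfl⟩ : ∃ m, k = m + 1 :=
        Nat.exists_eq_add_one.2 (by rw [mem_prefixSet] at hx; omega)
      have hm : m < n := by omega
      have hz : p (σ ⟨m, hm⟩) ≤ p x :=
        le_of_symm_le hσ (by rw [mem_prefixSet] at hx; rw [Equiv.symm_apply_apply]; exact Nat.le_of_lt_succ hx)
      rw [sum_erase_eq_sub hx, prefixSet_succ hm, sum_insert (notMem_prefixSet_self hm)]
      linarith [hlow m (by omega)]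
    · linarith [sum_erase_eq_sub hx (f := p), hp x]
  lt_sum y hy := by
    rcases hkdef with ⟨hs, -⟩ | ⟨rfl, -⟩
    · exact hs
    · exact absurd (prefixSet_self ▸ mem_univ y) hy

end Prefix

theorem stmt_0_general {n : ℕ} (p : Fin n → ℝ)
    (hp : ∀ i, 0 ≤ p i ∧ p i ≤ 1) (D : ℝ)
    (σ : Equiv.Perm (Fin n)) (hσ : ∀ i j : Fin n, i ≤ j → p (σ j) ≤ p (σ i))
    (k : ℕ) (hk : k ≤ n)
    (hkdef :
      ((∑ i ∈ prefixSet σ k, p i > D - 1/2) ∧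
        ∀ m < k, ∑ i ∈ prefixSet σ m, p i ≤ D - 1/2) ∨
      (k = n ∧ ∑ i ∈ prefixSet σ n, p i ≤ D - 1/2)) :
    ∀ T : Finset (Fin n), expLoss p D (prefixSet σ k) ≤ expLoss p D T := by
  intro T
  have hp0 : ∀ i, 0 ≤ p i := fun i => (hp i).1
  rw [expLoss_eq_reducedLoss, expLoss_eq_reducedLoss]
  have := (isGreedy_prefixSet hp0 hσ hk hkdef).reducedLoss_le hp0 T
  linarith

theorem stmt_0 {n : ℕ} (hn : 1 ≤ n) (p : Fin n → ℝ)
    (hp : ∀ i, 0 ≤ p i ∧ p i ≤ 1) (D : ℝ) (hD : 0 < D)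
    (σ : Equiv.Perm (Fin n)) (hσ : ∀ i j : Fin n, i ≤ j → p (σ j) ≤ p (σ i))
    (k : ℕ) (hk : k ≤ n)
    (hkdef :
      ((∑ i ∈ prefixSet σ k, p i > D - 1/2) ∧
        ∀ m < k, ∑ i ∈ prefixSet σ m, p i ≤ D - 1/2) ∨
      (k = n ∧ ∑ i ∈ prefixSet σ n, p i ≤ D - 1/2)) :
    ∀ T : Finset (Fin n), expLoss p D (prefixSet σ k) ≤ expLoss p D T :=
  stmt_0_general p hp D σ hσ k hk hkdef
end

section
/- Let n ≥ 1, let p : {1,…,n} → [0,1] be a probability profile, and let D be a target with 0 < D < 1/2. Then the empty set is optimal, i.e., f_{p,D}(∅) ≤ f_{p,D}(S) for every subset S ⊆ {1,…,n}. -/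
open Finset

/-! Writing `T = ∑_{i∈S} p_i`, the loss is `D² + T(1 - 2D) + (T² - ∑_{i∈S} p_i²)`; for a
nonnegative profile the last bracket is nonnegative, so `D ≤ 1/2` makes `∅` optimal. -/

lemma expLoss_empty {n : ℕ} (p : Fin n → ℝ) (D : ℝ) : expLoss p D ∅ = D ^ 2 := by
  simp [expLoss]

lemma expLoss_eq {n : ℕ} (p : Fin n → ℝ) (D : ℝ) (S : Finset (Fin n)) :
    expLoss p D S =
      D ^ 2 + (∑ i ∈ S, p i) * (1 - 2 * D) + ((∑ i ∈ S, p i) ^ 2 - ∑ i ∈ S, p i ^ 2) := by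
  simp only [expLoss, mul_sub, mul_one, sum_sub_distrib, sq]
  ring

theorem stmt_1_general {n : ℕ} (p : Fin n → ℝ)
    (hp : ∀ i, 0 ≤ p i ∧ p i ≤ 1) (D : ℝ) (hD2 : D < 1/2) :
    ∀ S : Finset (Fin n), expLoss p D (∅ : Finset (Fin n)) ≤ expLoss p D S := by
  intro S
  have hT : 0 ≤ ∑ i ∈ S, p i := sum_nonneg fun i _ => (hp i).1
  have hsq : ∑ i ∈ S, p i ^ 2 ≤ (∑ i ∈ S, p i) ^ 2 :=
    sum_sq_le_sq_sum_of_nonneg fun i _ => (hp i).1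
  rw [expLoss_empty, expLoss_eq]
  nlinarith

theorem stmt_1 {n : ℕ} (hn : 1 ≤ n) (p : Fin n → ℝ)
    (hp : ∀ i, 0 ≤ p i ∧ p i ≤ 1) (D : ℝ) (hD : 0 < D) (hD2 : D < 1/2) :
    ∀ S : Finset (Fin n), expLoss p D (∅ : Finset (Fin n)) ≤ expLoss p D S :=
  stmt_1_general p hp D hD2
end

section
/- Let n ≥ 1, let p : {1,…,n} → [0,1] be a probability profile, and let D > 0 be a target with ∑_{i=1}^{n} p_i ≤ D − 1/2. Then the full set {1,…,n} is optimal, i.e., f_{p,D}({1,…,n}) ≤ f_{p,D}(S) for every subset S ⊆ {1,…,n}. -/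
open Finset

/- Adding the items of `T \ S`, of total mass `t ≥ 0`, to `S` changes the loss by
`t (2 ∑_T p - t - 2D) + ∑_{T \ S} p (1 - p) ≤ t (2 ∑_T p - 2D + 1) - t²`,
which is nonpositive once `∑_T p ≤ D - 1/2`. -/
theorem expLoss_le_of_subset {n : ℕ} {p : Fin n → ℝ} {D : ℝ} {S T : Finset (Fin n)}
    (hp : ∀ i, 0 ≤ p i) (hST : S ⊆ T) (hT : ∑ i ∈ T, p i ≤ D - 1 / 2) :
    expLoss p D T ≤ expLoss p D S := by
  set t := ∑ i ∈ T \ S, p i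
  have ht : 0 ≤ t := sum_nonneg fun i _ => hp i
  have hmass : ∑ i ∈ T, p i = t + ∑ i ∈ S, p i := (sum_sdiff hST).symm
  have hvar : ∑ i ∈ T, p i * (1 - p i) = ∑ i ∈ T \ S, p i * (1 - p i) + ∑ i ∈ S, p i * (1 - p i) :=
    (sum_sdiff hST).symm
  have hvar_le : ∑ i ∈ T \ S, p i * (1 - p i) ≤ t :=
    sum_le_sum fun i _ => by nlinarith [sq_nonneg (p i)]
  unfold expLoss
  rw [hmass, hvar]
  nlinarith [mul_nonneg ht (by linarith : 0 ≤ D - 1 / 2 - ∑ i ∈ T, p i)]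

theorem stmt_2_general {n : ℕ} (p : Fin n → ℝ)
    (hp : ∀ i, 0 ≤ p i ∧ p i ≤ 1) (D : ℝ)
    (hsum : ∑ i, p i ≤ D - 1/2) :
    ∀ S : Finset (Fin n), expLoss p D (Finset.univ : Finset (Fin n)) ≤ expLoss p D S :=
  fun S => expLoss_le_of_subset (fun i => (hp i).1) (subset_univ S) hsum

theorem stmt_2 {n : ℕ} (hn : 1 ≤ n) (p : Fin n → ℝ)
    (hp : ∀ i, 0 ≤ p i ∧ p i ≤ 1) (D : ℝ) (hD : 0 < D)
    (hsum : ∑ i, p i ≤ D - 1/2) :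
    ∀ S : Finset (Fin n), expLoss p D (Finset.univ : Finset (Fin n)) ≤ expLoss p D S :=
  stmt_2_general p hp D hsum
end

section
/- Let n ≥ 1, let p : {1,…,n} → (0,1] be a probability profile with p_i > 0 for all i, let D > 0 be a target, and suppose S* ⊆ {1,…,n} is optimal. Then: (a) for every j ∈ S*, ∑_{i ∈ S*∖{j}} p_i ≤ D − 1/2; and (b) if S* ≠ {1,…,n}, then ∑_{i ∈ S*} p_i ≥ D − 1/2. -/
/-! Adding an item `j` to `S` changes the loss by `p j * (2 (∑_S p − D) + 1)`: the quadratic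
terms `p j ^ 2` from the square and from the variance cancel. So an optimal set can neither gain
nor lose one item, which pins its total within `1/2` of `D`. -/

open Finset

section

variable {n : ℕ} (p : Fin n → ℝ) (D : ℝ) {S : Finset (Fin n)} {j : Fin n}

theorem expLoss_insert (hj : j ∉ S) :
    expLoss p D (insert j S) = expLoss p D S + p j * (2 * (∑ i ∈ S, p i - D) + 1) := by
  simp only [expLoss, sum_insert hj]
  ring

theorem expLoss_le_expLoss_insert_iff (hj : j ∉ S) (hpj : 0 < p j) :
    expLoss p D S ≤ expLoss p D (insert j S) ↔ D - 1 / 2 ≤ ∑ i ∈ S, p i := by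
  rw [expLoss_insert p D hj, le_add_iff_nonneg_right, mul_nonneg_iff_of_pos_left hpj]
  constructor <;> intro h <;> linarith

theorem expLoss_insert_le_expLoss_iff (hj : j ∉ S) (hpj : 0 < p j) :
    expLoss p D (insert j S) ≤ expLoss p D S ↔ ∑ i ∈ S, p i ≤ D - 1 / 2 := by
  rw [expLoss_insert p D hj, add_le_iff_nonpos_right, ← mul_zero (p j),
    mul_le_mul_iff_of_pos_left hpj]
  constructor <;> intro h <;> linarith

end

theorem stmt_3_general {n : ℕ} (p : Fin n → ℝ)
    (hp : ∀ i, 0 < p i ∧ p i ≤ 1) (D : ℝ)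
    (Sstar : Finset (Fin n))
    (hopt : ∀ S : Finset (Fin n), expLoss p D Sstar ≤ expLoss p D S) :
    (∀ j ∈ Sstar, ∑ i ∈ Sstar.erase j, p i ≤ D - 1/2) ∧
    (Sstar ≠ Finset.univ → D - 1/2 ≤ ∑ i ∈ Sstar, p i) := by
  constructor
  · intro j hj
    refine (expLoss_insert_le_expLoss_iff p D (notMem_erase j Sstar) (hp j).1).mp ?_
    rw [insert_erase hj]
    exact hopt _
  · intro hne
    obtain ⟨j, hj⟩ : ∃ j, j ∉ Sstar := by
      by_contra! hall
      exact hne (eq_univ_iff_forall.mpr hall)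
    exact (expLoss_le_expLoss_insert_iff p D hj (hp j).1).mp (hopt (insert j Sstar))

theorem stmt_3 {n : ℕ} (hn : 1 ≤ n) (p : Fin n → ℝ)
    (hp : ∀ i, 0 < p i ∧ p i ≤ 1) (D : ℝ) (hD : 0 < D)
    (Sstar : Finset (Fin n))
    (hopt : ∀ S : Finset (Fin n), expLoss p D Sstar ≤ expLoss p D S) :
    (∀ j ∈ Sstar, ∑ i ∈ Sstar.erase j, p i ≤ D - 1/2) ∧
    (Sstar ≠ Finset.univ → D - 1/2 ≤ ∑ i ∈ Sstar, p i) :=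
  stmt_3_general p hp D Sstar hopt
end
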